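/- arXiv:2403.11557 — 3 statements merged into one kernel-verified Lean document; each statement's English description precedes it below -/
import Mathlib

section
/- Let m_{t+1,i} = β₁ m_{t,i} + (1−β₁) s_{t,i} with β₁ ∈ (0,1) and m_{1,i} = 0 for all i. Let m̃_t denote the vector of all-averages (stack of n copies of (1/n)∑_i m_{t,i}), and similarly s̃_t. Then for every T ≥ 1: ∑_{t=1}^T ‖𝐦_t − m̃_t‖² ≤ 4 ∑_{t=1}^T ‖𝐬_t − s̃_t‖², where 𝐦_t, 𝐬_t are the stacked vectors in R^{nd}. -/
private lemma convex_norm_sq {E : Type*} [NormedAddCommGroup E] [NormedSpace ℝ E]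
    (β : ℝ) (hβ : 0 < β) (hβ' : β < 1) (x y : E) :
    ‖β • x + (1 - β) • y‖ ^ 2 ≤ β * ‖x‖ ^ 2 + (1 - β) * ‖y‖ ^ 2 := by
  have h1 : ‖β • x + (1 - β) • y‖ ≤ β * ‖x‖ + (1 - β) * ‖y‖ := by
    calc ‖β • x + (1 - β) • y‖ ≤ ‖β • x‖ + ‖(1 - β) • y‖ := norm_add_le _ _
    _ = β * ‖x‖ + (1 - β) * ‖y‖ := by
        rw [norm_smul, norm_smul, Real.norm_eq_abs, Real.norm_eq_abs,
          abs_of_pos hβ, abs_of_pos (by linarith)]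
  have hx := norm_nonneg x
  have hy := norm_nonneg y
  have h0 := norm_nonneg (β • x + (1 - β) • y)
  have h2 : ‖β • x + (1 - β) • y‖ ^ 2 ≤ (β * ‖x‖ + (1 - β) * ‖y‖) ^ 2 := by
    have := mul_le_mul h1 h1 h0 (by nlinarith)
    nlinarith
  nlinarith [mul_nonneg (mul_nonneg hβ.le (by linarith : (0:ℝ) ≤ 1 - β))
    (sq_nonneg (‖x‖ - ‖y‖))]

/-- Consensus error of the momentum gradient is bounded by that of the GT estimator. -/
theorem stmt_7 (n d : ℕ) (hn : 0 < n)
    (β₁ : ℝ) (hβ₁ : 0 < β₁) (hβ₁' : β₁ < 1)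
    (m s : ℕ → Fin n → EuclideanSpace ℝ (Fin d))
    (hm1 : ∀ i, m 1 i = 0)
    (hm : ∀ t i, m (t + 1) i = β₁ • m t i + (1 - β₁) • s t i) :
    ∀ T ≥ 1,
      ∑ t ∈ Finset.Icc 1 T, ∑ i, ‖m t i - (1 / (n : ℝ)) • ∑ k, m t k‖ ^ 2 ≤
        4 * ∑ t ∈ Finset.Icc 1 T, ∑ i, ‖s t i - (1 / (n : ℝ)) • ∑ k, s t k‖ ^ 2 := by
  set A : ℕ → ℝ := fun t => ∑ i, ‖m t i - (1 / (n : ℝ)) • ∑ k, m t k‖ ^ 2 with hA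
  set B : ℕ → ℝ := fun t => ∑ i, ‖s t i - (1 / (n : ℝ)) • ∑ k, s t k‖ ^ 2 with hB
  have hAnn : ∀ t, 0 ≤ A t := fun t =>
    Finset.sum_nonneg fun i _ => sq_nonneg _
  have hBnn : ∀ t, 0 ≤ B t := fun t =>
    Finset.sum_nonneg fun i _ => sq_nonneg _
  have hA1 : A 1 = 0 := by
    simp [hA, hm1]
  -- one-step bound
  have hstep : ∀ t, A (t + 1) ≤ β₁ * A t + (1 - β₁) * B t := by
    intro t
    have key : ∀ i : Fin n,
        m (t + 1) i - (1 / (n : ℝ)) • ∑ k, m (t + 1) k =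
        β₁ • (m t i - (1 / (n : ℝ)) • ∑ k, m t k) +
          (1 - β₁) • (s t i - (1 / (n : ℝ)) • ∑ k, s t k) := by
      intro i
      have hsum : ∑ k, m (t + 1) k = β₁ • ∑ k, m t k + (1 - β₁) • ∑ k, s t k := by
        rw [Finset.smul_sum, Finset.smul_sum, ← Finset.sum_add_distrib]
        exact Finset.sum_congr rfl fun k _ => hm t k
      rw [hm t i, hsum]
      module
    have h1 : A (t + 1) ≤ ∑ i : Fin n,
        (β₁ * ‖m t i - (1 / (n : ℝ)) • ∑ k, m t k‖ ^ 2 +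
         (1 - β₁) * ‖s t i - (1 / (n : ℝ)) • ∑ k, s t k‖ ^ 2) := by
      apply Finset.sum_le_sum
      intro i _
      rw [key i]
      exact convex_norm_sq β₁ hβ₁ hβ₁' _ _
    calc A (t + 1) ≤ _ := h1
      _ = β₁ * A t + (1 - β₁) * B t := by
        rw [Finset.sum_add_distrib, ← Finset.mul_sum, ← Finset.mul_sum]
  -- summed bound: S_A(T+1) ≤ β₁ S_A(T) + (1-β₁) S_B(T)
  have hsummed : ∀ T : ℕ,
      ∑ t ∈ Finset.Icc 1 (T + 1), A t ≤
        β₁ * ∑ t ∈ Finset.Icc 1 T, A t + (1 - β₁) * ∑ t ∈ Finset.Icc 1 T, B t := by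
    intro T
    induction T with
    | zero => simp [hA1]
    | succ T ih =>
      rw [Finset.sum_Icc_succ_top (by omega : 1 ≤ T + 1 + 1),
        Finset.sum_Icc_succ_top (by omega : 1 ≤ T + 1),
        Finset.sum_Icc_succ_top (by omega : 1 ≤ T + 1)]
      rw [Finset.sum_Icc_succ_top (by omega : 1 ≤ T + 1)] at ih
      have := hstep (T + 1)
      linarith
  intro T hT
  obtain ⟨T', rfl⟩ : ∃ T', T = T' + 1 := ⟨T - 1, by omega⟩
  have hmono : ∑ t ∈ Finset.Icc 1 T', A t ≤ ∑ t ∈ Finset.Icc 1 (T' + 1), A t := by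
    apply Finset.sum_le_sum_of_subset_of_nonneg
    · exact Finset.Icc_subset_Icc_right (by omega)
    · intro t _ _; exact hAnn t
  have hmonoB : ∑ t ∈ Finset.Icc 1 T', B t ≤ ∑ t ∈ Finset.Icc 1 (T' + 1), B t := by
    apply Finset.sum_le_sum_of_subset_of_nonneg
    · exact Finset.Icc_subset_Icc_right (by omega)
    · intro t _ _; exact hBnn t
  have h := hsummed T'
  have hBnn' : 0 ≤ ∑ t ∈ Finset.Icc 1 (T' + 1), B t :=
    Finset.sum_nonneg fun t _ => hBnn t
  -- (1-β₁) S_A(T'+1) ≤ (1-β₁) S_B(T'+1)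
  nlinarith [h, hmono, hmonoB, hBnn']
end

section
/- Suppose ‖𝐯_{t+1} − ṽ_{t+1}‖ ≤ β₂‖𝐯_t − ṽ_t‖ + C(1−β₂)‖𝐬_t − s̃_t‖ for all t ≥ 1, where β₂ ∈ (0,1) and C > 0. Then for every T ≥ 1: ∑_{t=1}^T ‖𝐯_t − ṽ_t‖² ≤ (2/(1−β₂²))‖𝐯_1 − ṽ_1‖² + (4C²/ (1−β₂²)²)(1−β₂)² ∑_{t=1}^T ‖𝐬_t − s̃_t‖² ≤ (2/(1−β₂²))‖𝐯_1 − ṽ_1‖² + 4C² ∑_{t=1}^T ‖𝐬_t − s̃_t‖². -/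
/-!
Young's inequality with weight `(1 - β₂²) / (2 β₂²)` turns the linear recursion into
`v (t+1)² ≤ ρ v t² + 2 / (1 - β₂²) · (C (1 - β₂) s t)²` with `ρ = (1 + β₂²) / 2 < 1`.
Summing this over `t` bounds `(1 - ρ) ∑ v²` by `v 1²` plus the summed forcing terms, and
`1 - ρ = (1 - β₂²) / 2` gives the stated constants.
-/

open Finset

theorem sq_mul_add_le_of_sq_lt_one {β y c : ℝ} (hβ : β ^ 2 < 1) :
    (β * y + c) ^ 2 ≤ (1 + β ^ 2) / 2 * y ^ 2 + 2 / (1 - β ^ 2) * c ^ 2 := by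
  have hD : 0 < 1 - β ^ 2 := by linarith
  rw [← sub_nonneg]
  have expand : (1 + β ^ 2) / 2 * y ^ 2 + 2 / (1 - β ^ 2) * c ^ 2 - (β * y + c) ^ 2 =
      (((1 - β ^ 2) * y - 2 * β * c) ^ 2 / 2 + (1 - β ^ 2) * c ^ 2) / (1 - β ^ 2) := by
    field_simp
    ring
  rw [expand]
  positivity

theorem sum_Icc_succ_le_of_le_mul_add {u w : ℕ → ℝ} {ρ : ℝ}
    (h : ∀ t ≥ 1, u (t + 1) ≤ ρ * u t + w t) (T : ℕ) :
    ∑ t ∈ Icc 1 (T + 1), u t ≤ u 1 + ρ * ∑ t ∈ Icc 1 T, u t + ∑ t ∈ Icc 1 T, w t := by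
  induction T with
  | zero => simp
  | succ n ih =>
    rw [sum_Icc_succ_top (by omega : 1 ≤ n + 1 + 1)]
    simp only [sum_Icc_succ_top (show 1 ≤ n + 1 by omega)] at ih ⊢
    linarith [h (n + 1) (by omega)]

theorem one_sub_mul_sum_Icc_le_of_le_mul_add {u w : ℕ → ℝ} {ρ : ℝ}
    (h : ∀ t ≥ 1, u (t + 1) ≤ ρ * u t + w t) (hu : ∀ t, 0 ≤ u t) (T : ℕ) :
    (1 - ρ) * ∑ t ∈ Icc 1 T, u t ≤ u 1 + ∑ t ∈ Icc 1 T, w t := by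
  have hmono : ∑ t ∈ Icc 1 T, u t ≤ ∑ t ∈ Icc 1 (T + 1), u t := by
    rw [sum_Icc_succ_top (by omega : 1 ≤ T + 1)]
    linarith [hu (T + 1)]
  linarith [sum_Icc_succ_le_of_le_mul_add h T]

theorem stmt_12_general (v s : ℕ → ℝ) (β₂ C : ℝ) (hβ₂ : 0 < β₂) (hβ₂' : β₂ < 1)
    (hv : ∀ t, 0 ≤ v t)
    (hrec : ∀ t ≥ 1, v (t + 1) ≤ β₂ * v t + C * (1 - β₂) * s t) :
    ∀ T ≥ 1,
      (∑ t ∈ Finset.Icc 1 T, (v t) ^ 2 ≤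
          (2 / (1 - β₂ ^ 2)) * (v 1) ^ 2 +
            (4 * C ^ 2 / (1 - β₂ ^ 2) ^ 2) * (1 - β₂) ^ 2 * ∑ t ∈ Finset.Icc 1 T, (s t) ^ 2) ∧
        ∑ t ∈ Finset.Icc 1 T, (v t) ^ 2 ≤
          (2 / (1 - β₂ ^ 2)) * (v 1) ^ 2 + 4 * C ^ 2 * ∑ t ∈ Finset.Icc 1 T, (s t) ^ 2 := by
  intro T _
  have hD : 0 < 1 - β₂ ^ 2 := by nlinarith
  have hstep : ∀ t ≥ 1, v (t + 1) ^ 2 ≤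
      (1 + β₂ ^ 2) / 2 * v t ^ 2 + 2 * (C * (1 - β₂)) ^ 2 / (1 - β₂ ^ 2) * s t ^ 2 := fun t ht =>
    calc v (t + 1) ^ 2 ≤ (β₂ * v t + C * (1 - β₂) * s t) ^ 2 :=
          pow_le_pow_left₀ (hv _) (hrec t ht) 2
      _ ≤ _ := sq_mul_add_le_of_sq_lt_one (by nlinarith)
      _ = _ := by ring
  have hsum := one_sub_mul_sum_Icc_le_of_le_mul_add hstep (fun t => sq_nonneg (v t)) T
  rw [← mul_sum] at hsum
  have hfirst : ∑ t ∈ Icc 1 T, v t ^ 2 ≤ 2 / (1 - β₂ ^ 2) * v 1 ^ 2 +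
      4 * C ^ 2 / (1 - β₂ ^ 2) ^ 2 * (1 - β₂) ^ 2 * ∑ t ∈ Icc 1 T, s t ^ 2 := by
    calc ∑ t ∈ Icc 1 T, v t ^ 2
        = 2 / (1 - β₂ ^ 2) * ((1 - (1 + β₂ ^ 2) / 2) * ∑ t ∈ Icc 1 T, v t ^ 2) := by
          field_simp
          ring
      _ ≤ 2 / (1 - β₂ ^ 2) * (v 1 ^ 2 +
          2 * (C * (1 - β₂)) ^ 2 / (1 - β₂ ^ 2) * ∑ t ∈ Icc 1 T, s t ^ 2) := by gcongr
      _ = _ := by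
          field_simp
          ring
  -- `(1 - β₂)² ≤ (1 - β₂²)²` because `1 - β₂ ≤ (1 - β₂)(1 + β₂)`
  have hcoef : 4 * C ^ 2 / (1 - β₂ ^ 2) ^ 2 * (1 - β₂) ^ 2 ≤ 4 * C ^ 2 := by
    rw [div_mul_eq_mul_div, div_le_iff₀ (by positivity)]
    have : (1 - β₂) ^ 2 ≤ (1 - β₂ ^ 2) ^ 2 := pow_le_pow_left₀ (by linarith) (by nlinarith) 2
    nlinarith [sq_nonneg C]
  have hs : 0 ≤ ∑ t ∈ Icc 1 T, s t ^ 2 := sum_nonneg fun t _ => sq_nonneg (s t)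
  exact ⟨hfirst, hfirst.trans (by gcongr)⟩

/-- Summed squared consensus error of the adaptive vector. -/
theorem stmt_12 (v s : ℕ → ℝ) (β₂ C : ℝ) (hβ₂ : 0 < β₂) (hβ₂' : β₂ < 1) (hC : 0 < C)
    (hv : ∀ t, 0 ≤ v t) (hs : ∀ t, 0 ≤ s t)
    (hrec : ∀ t ≥ 1, v (t + 1) ≤ β₂ * v t + C * (1 - β₂) * s t) :
    ∀ T ≥ 1,
      (∑ t ∈ Finset.Icc 1 T, (v t) ^ 2 ≤
          (2 / (1 - β₂ ^ 2)) * (v 1) ^ 2 +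
            (4 * C ^ 2 / (1 - β₂ ^ 2) ^ 2) * (1 - β₂) ^ 2 * ∑ t ∈ Finset.Icc 1 T, (s t) ^ 2) ∧
        ∑ t ∈ Finset.Icc 1 T, (v t) ^ 2 ≤
          (2 / (1 - β₂ ^ 2)) * (v 1) ^ 2 + 4 * C ^ 2 * ∑ t ∈ Finset.Icc 1 T, (s t) ^ 2 :=
  stmt_12_general v s β₂ C hβ₂ hβ₂' hv hrec
end

section
/- Let f : R^d → R be differentiable and L-smooth, let V̄ be a positive-definite diagonal matrix with diagonal entries in [v_min, v_max], and let z, z⁺, x ∈ R^d, α > 0. Then f(z⁺) ≤ f(z) + (L²/2)‖z − x‖² − α(v_max^{−1/2} − α v_min^{−1/2}/2)‖∇f(x)‖² + (v_max^{1/2}/2)‖(z − z⁺)/α − V̄^{−1/2}∇f(x)‖² + ((L+1)/2)‖z − z⁺‖². -/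
/-!
By the descent lemma, `f z⁺ ≤ f z + ⟪∇f z, z⁺ - z⟫ + L/2 ‖z⁺ - z‖²`. Writing
`∇f z = (∇f z - ∇f x) + ∇f x`, the first cross term is at most `L ‖z - x‖ ‖z - z⁺‖` and is split
by Young's inequality. For the second, put `z - z⁺ = α u` and
`u = (u - V̄^{-1/2} ∇f x) + V̄^{-1/2} ∇f x`: the diagonal part is at least `v_max^{-1/2} ‖∇f x‖²`,
and the remainder is handled by Young's inequality with weights `v_max^{∓1/2}`, followed by
`v_max^{-1/2} ≤ v_min^{-1/2}`.
-/

open RealInnerProductSpace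

/-- Coordinatewise action of `V̄^{-1/2}` for a positive diagonal matrix with diagonal `v`. -/
noncomputable def invSqrtMul {d : ℕ} (v : Fin d → ℝ) (x : EuclideanSpace ℝ (Fin d)) :
    EuclideanSpace ℝ (Fin d) := WithLp.toLp 2 (fun j => (v j) ^ (-(1 / 2 : ℝ)) * x j)

theorem descent_lemma {E : Type*} [NormedAddCommGroup E] [InnerProductSpace ℝ E]
    [CompleteSpace E] {f : E → ℝ} {L : ℝ} (hf : ∀ y, DifferentiableAt ℝ f y) {a : E}
    (hL : ∀ y, ‖gradient f y - gradient f a‖ ≤ L * ‖y - a‖) (b : E) :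
    f b ≤ f a + ⟪gradient f a, b - a⟫ + L / 2 * ‖b - a‖ ^ 2 := by
  set p := b - a
  -- `f` along the segment minus its quadratic upper model; it is antitone on `[0, ∞)`.
  let φ : ℝ → ℝ := fun t => f (a + t • p) - t * ⟪gradient f a, p⟫ - L / 2 * t ^ 2 * ‖p‖ ^ 2
  let φ' : ℝ → ℝ := fun t => ⟪gradient f (a + t • p) - gradient f a, p⟫ - L * t * ‖p‖ ^ 2
  have hφ : ∀ t, HasDerivAt φ (φ' t) t := by
    intro t
    have hline : HasDerivAt (fun s : ℝ => a + s • p) p t := by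
      simpa using ((hasDerivAt_id t).smul_const p).const_add a
    have hfline := (hf (a + t • p)).hasGradientAt.hasFDerivAt.comp_hasDerivAt t hline
    refine ((hfline.sub ((hasDerivAt_id t).mul_const ⟪gradient f a, p⟫)).sub
      (((hasDerivAt_pow 2 t).const_mul (L / 2)).mul_const (‖p‖ ^ 2))).congr_deriv ?_
    simp only [InnerProductSpace.toDual_apply_apply, φ', inner_sub_left]
    ring
  have hφ'_nonpos : ∀ t ∈ interior (Set.Ici (0 : ℝ)), φ' t ≤ 0 := by
    intro t ht
    rw [interior_Ici, Set.mem_Ioi] at ht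
    have hgrad : ‖gradient f (a + t • p) - gradient f a‖ ≤ L * (t * ‖p‖) := by
      simpa [norm_smul, abs_of_pos ht] using hL (a + t • p)
    calc φ' t ≤ ‖gradient f (a + t • p) - gradient f a‖ * ‖p‖ - L * t * ‖p‖ ^ 2 :=
          sub_le_sub_right (real_inner_le_norm _ _) _
      _ ≤ L * (t * ‖p‖) * ‖p‖ - L * t * ‖p‖ ^ 2 := by gcongr
      _ = 0 := by ring
  have hanti : AntitoneOn φ (Set.Ici 0) :=
    antitoneOn_of_hasDerivWithinAt_nonpos (convex_Ici 0)
      (fun t _ => (hφ t).continuousAt.continuousWithinAt)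
      (fun t _ => (hφ t).hasDerivWithinAt) hφ'_nonpos
  have h := hanti (Set.mem_Ici.2 le_rfl) (Set.mem_Ici.2 zero_le_one) zero_le_one
  simp only [φ, zero_smul, add_zero, zero_mul, sub_zero, one_smul, one_mul, one_pow,
    ne_eq, OfNat.ofNat_ne_zero, not_false_eq_true, zero_pow, mul_zero, p, add_sub_cancel] at h
  linarith

theorem rpow_neg_half_mul_sq_norm_le_inner_invSqrtMul {d : ℕ} {v : Fin d → ℝ} {vmax : ℝ}
    (hv : ∀ j, 0 < v j) (hvmax : ∀ j, v j ≤ vmax) (g : EuclideanSpace ℝ (Fin d)) :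
    vmax ^ (-(1 / 2 : ℝ)) * ‖g‖ ^ 2 ≤ ⟪g, invSqrtMul v g⟫ := by
  rw [← real_inner_self_eq_norm_sq]
  simp only [invSqrtMul, PiLp.inner_apply, RCLike.inner_apply, conj_trivial, Finset.mul_sum]
  refine Finset.sum_le_sum fun j _ => ?_
  have := Real.rpow_le_rpow_of_nonpos (hv j) (hvmax j) (by norm_num : -(1 / 2 : ℝ) ≤ 0)
  nlinarith [mul_self_nonneg (g j)]

theorem mul_le_div_mul_sq_add_div_mul_sq {s t : ℝ} (hs : 0 ≤ s) (hst : s * t = 1) (a b : ℝ) :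
    a * b ≤ t / 2 * a ^ 2 + s / 2 * b ^ 2 := by
  have hexpand :
      s * (t * a - b) ^ 2 = t * a ^ 2 * (s * t) - 2 * (a * b) * (s * t) + s * b ^ 2 := by
    ring
  rw [hst] at hexpand
  linarith [mul_nonneg hs (sq_nonneg (t * a - b))]

theorem inner_neg_smul_le_invSqrtMul {d : ℕ} {v : Fin d → ℝ} {α vmin vmax : ℝ} (hα : 0 ≤ α)
    (hmin : 0 < vmin) (hle : vmin ≤ vmax) (hv : ∀ j, v j ∈ Set.Icc vmin vmax)
    (g u : EuclideanSpace ℝ (Fin d)) :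
    ⟪g, -(α • u)⟫ ≤ -α * vmax ^ (-(1 / 2 : ℝ)) * ‖g‖ ^ 2
      + α ^ 2 * vmin ^ (-(1 / 2 : ℝ)) / 2 * ‖g‖ ^ 2
      + vmax ^ (1 / 2 : ℝ) / 2 * ‖u - invSqrtMul v g‖ ^ 2 := by
  have hmax : 0 < vmax := hmin.trans_le hle
  have hdiag := rpow_neg_half_mul_sq_norm_le_inner_invSqrtMul
    (fun j => hmin.trans_le (hv j).1) (fun j => (hv j).2) g
  have hcs : -⟪g, u - invSqrtMul v g⟫ ≤ ‖g‖ * ‖u - invSqrtMul v g‖ :=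
    (neg_le_abs _).trans (abs_real_inner_le_norm _ _)
  have hinv : vmax ^ (1 / 2 : ℝ) * vmax ^ (-(1 / 2 : ℝ)) = 1 := by
    rw [← Real.rpow_add hmax]; norm_num
  have hmono : vmax ^ (-(1 / 2 : ℝ)) ≤ vmin ^ (-(1 / 2 : ℝ)) :=
    Real.rpow_le_rpow_of_nonpos hmin hle (by norm_num)
  have hyoung : α * (‖g‖ * ‖u - invSqrtMul v g‖) ≤ α ^ 2 * vmin ^ (-(1 / 2 : ℝ)) / 2 * ‖g‖ ^ 2
      + vmax ^ (1 / 2 : ℝ) / 2 * ‖u - invSqrtMul v g‖ ^ 2 := by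
    have := mul_le_div_mul_sq_add_div_mul_sq (Real.rpow_nonneg hmax.le _) hinv
      (α * ‖g‖) ‖u - invSqrtMul v g‖
    nlinarith [mul_le_mul_of_nonneg_right hmono (sq_nonneg (α * ‖g‖))]
  calc ⟪g, -(α • u)⟫ = -α * ⟪g, invSqrtMul v g⟫ + α * -⟪g, u - invSqrtMul v g⟫ := by
        rw [inner_neg_right, inner_smul_right, inner_sub_right]; ring
    _ ≤ _ := by nlinarith

theorem stmt_17_general (d : ℕ) (L α vmin vmax : ℝ)
    (hα : 0 < α) (hmin : 0 < vmin) (hle : vmin ≤ vmax)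
    (f : EuclideanSpace ℝ (Fin d) → ℝ)
    (hdiff : ∀ y, DifferentiableAt ℝ f y)
    (hsmooth : ∀ y w, ‖gradient f y - gradient f w‖ ≤ L * ‖y - w‖)
    (vbar : Fin d → ℝ) (hvbar : ∀ j, vbar j ∈ Set.Icc vmin vmax)
    (z zp x : EuclideanSpace ℝ (Fin d)) :
    f zp ≤ f z + L ^ 2 / 2 * ‖z - x‖ ^ 2
        - α * (vmax ^ (-(1 / 2 : ℝ)) - α * vmin ^ (-(1 / 2 : ℝ)) / 2) * ‖gradient f x‖ ^ 2
        + vmax ^ ((1 / 2 : ℝ)) / 2 *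
            ‖(1 / α) • (z - zp) - invSqrtMul vbar (gradient f x)‖ ^ 2
        + (L + 1) / 2 * ‖z - zp‖ ^ 2 := by
  have hdescent := descent_lemma hdiff (fun y => hsmooth y z) zp
  rw [norm_sub_rev] at hdescent
  have hstep : zp - z = -(α • ((1 / α) • (z - zp))) := by
    rw [smul_smul, mul_one_div_cancel hα.ne', one_smul, neg_sub]
  have hscaled :=
    inner_neg_smul_le_invSqrtMul hα.le hmin hle hvbar (gradient f x) ((1 / α) • (z - zp))
  rw [← hstep] at hscaled
  have hsmoothed : ⟪gradient f z - gradient f x, zp - z⟫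
      ≤ L ^ 2 / 2 * ‖z - x‖ ^ 2 + 1 / 2 * ‖z - zp‖ ^ 2 :=
    calc ⟪gradient f z - gradient f x, zp - z⟫
        ≤ ‖gradient f z - gradient f x‖ * ‖z - zp‖ := by
          rw [norm_sub_rev z]; exact real_inner_le_norm _ _
      _ ≤ L * ‖z - x‖ * ‖z - zp‖ := by gcongr; exact hsmooth z x
      _ ≤ L ^ 2 / 2 * ‖z - x‖ ^ 2 + 1 / 2 * ‖z - zp‖ ^ 2 := by
          have := mul_le_div_mul_sq_add_div_mul_sq zero_le_one (one_mul 1) (L * ‖z - x‖) ‖z - zp‖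
          linarith [mul_pow L ‖z - x‖ 2]
  have hsplit : ⟪gradient f z, zp - z⟫
      = ⟪gradient f z - gradient f x, zp - z⟫ + ⟪gradient f x, zp - z⟫ := by
    rw [inner_sub_left]; ring
  linarith

/-- Descent-type inequality from smoothness with adaptive diagonal scaling. -/
theorem stmt_17 (d : ℕ) (L α vmin vmax : ℝ)
    (hL : 0 ≤ L) (hα : 0 < α) (hmin : 0 < vmin) (hle : vmin ≤ vmax)
    (f : EuclideanSpace ℝ (Fin d) → ℝ)
    (hdiff : ∀ y, DifferentiableAt ℝ f y)
    (hsmooth : ∀ y w, ‖gradient f y - gradient f w‖ ≤ L * ‖y - w‖)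
    (vbar : Fin d → ℝ) (hvbar : ∀ j, vbar j ∈ Set.Icc vmin vmax)
    (z zp x : EuclideanSpace ℝ (Fin d)) :
    f zp ≤ f z + L ^ 2 / 2 * ‖z - x‖ ^ 2
        - α * (vmax ^ (-(1 / 2 : ℝ)) - α * vmin ^ (-(1 / 2 : ℝ)) / 2) * ‖gradient f x‖ ^ 2
        + vmax ^ ((1 / 2 : ℝ)) / 2 *
            ‖(1 / α) • (z - zp) - invSqrtMul vbar (gradient f x)‖ ^ 2
        + (L + 1) / 2 * ‖z - zp‖ ^ 2 :=
  stmt_17_general d L α vmin vmax hα hmin hle f hdiff hsmooth vbar hvbar z zp x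
end
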